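/- arXiv:2510.25209 — 2 statements merged into one kernel-verified Lean document; each statement's English description precedes it below -/
import Mathlib

section
/- The Dulmage–Mendelsohn decomposition is independent of the choice of maximum matching: if M and M' are two maximum matchings of a bipartite graph G, then the sets of even, odd, and unreachable vertices defined with respect to M coincide with those defined with respect to M'. -/
/-!
Flipping an even alternating path from an unmatched vertex to `v` gives a matching of the same
size that misses `v`. Conversely, if a maximum matching `N` misses `v`, follow `M ∆ N` back from
`v`, alternately along an `M`-edge and an `N`-edge: the walk cannot reach an `N`-unmatched vertex,
as that would close an `N`-augmenting path, so by finiteness it stops at an `M`-unmatched vertex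
and yields an even alternating path to `v`. Hence the even vertices are exactly those missed by
some maximum matching. In a bipartite graph the parity of a path is fixed by the colours of its
ends, which makes the odd vertices exactly the neighbours of even vertices; the unreachable
vertices are the remaining ones.
-/

open SimpleGraph

/-- Edges of a list alternate w.r.t. membership in `S`; the flag records whether
the next edge must belong to `S`. -/
def altEdges {V : Type*} (S : Set (Sym2 V)) : Bool → List (Sym2 V) → Prop
  | _, [] => True
  | flag, e :: rest => (e ∈ S ↔ flag = true) ∧ altEdges S (!flag) rest

/-- `v` is reachable from some `M`-unmatched vertex by an alternating path
(starting with a non-matching edge) of even length. -/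
def EvenVtx {V : Type*} (G : SimpleGraph V) (M : G.Subgraph) (v : V) : Prop :=
  ∃ u, u ∉ M.verts ∧ ∃ p : G.Walk u v,
    p.IsPath ∧ altEdges M.edgeSet false p.edges ∧ Even p.length

/-- `v` is reachable from some `M`-unmatched vertex by an alternating path of
odd length. -/
def OddVtx {V : Type*} (G : SimpleGraph V) (M : G.Subgraph) (v : V) : Prop :=
  ∃ u, u ∉ M.verts ∧ ∃ p : G.Walk u v,
    p.IsPath ∧ altEdges M.edgeSet false p.edges ∧ Odd p.length

/-- `v` is not reachable from any `M`-unmatched vertex by an alternating path. -/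
def UnreachableVtx {V : Type*} (G : SimpleGraph V) (M : G.Subgraph) (v : V) : Prop :=
  ∀ u (p : G.Walk u v), u ∉ M.verts → p.IsPath →
    altEdges M.edgeSet false p.edges → False

open Walk Subgraph

theorem SimpleGraph.Walk.exists_eq_concat_of_not_nil {V : Type*} {G : SimpleGraph V} {u v : V}
    (p : G.Walk u v) (hp : ¬p.Nil) : ∃ (w : V) (q : G.Walk u w) (h : G.Adj w v), p = q.concat h :=
  ⟨_, _, _, (concat_dropLast (p.adj_penultimate hp)).symm⟩

section Alternation

variable {V : Type*} {S T : Set (Sym2 V)}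

theorem altEdges_append (l₁ l₂ : List (Sym2 V)) (f : Bool) :
    altEdges S f (l₁ ++ l₂) ↔ altEdges S f l₁ ∧ altEdges S (not^[l₁.length] f) l₂ := by
  induction l₁ generalizing f with
  | nil => simp [altEdges]
  | cons e l ih =>
    simp only [List.cons_append, altEdges, ih, List.length_cons, Function.iterate_succ_apply,
      and_assoc]

theorem altEdges_congr {l : List (Sym2 V)} (h : ∀ e ∈ l, e ∈ S ↔ e ∈ T) (f : Bool) :
    altEdges S f l ↔ altEdges T f l := by
  induction l generalizing f with
  | nil => simp [altEdges]
  | cons e l ih =>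
    simp only [altEdges, h e List.mem_cons_self, ih fun e' he' => h e' (List.mem_cons_of_mem _ he')]

variable {G : SimpleGraph V}

/-- `not^[p.length] f` is the flag after the last edge, so the side conditions say that an
endpoint counts only if its walk edge lies in `S`. -/
theorem exists_mem_edges_of_altEdges {u v y : V} {f : Bool} (p : G.Walk u v)
    (hp : altEdges S f p.edges) (hy : y ∈ p.support) (hu : y = u → f = true)
    (hv : y = v → not^[p.length] f = false) : ∃ z, s(y, z) ∈ p.edges ∧ s(y, z) ∈ S := by
  induction p generalizing f with
  | nil =>
    obtain rfl : y = _ := by simpa using hy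
    simp [hu rfl] at hv
  | @cons u a v h t ih =>
    obtain ⟨hfirst, hrest⟩ := hp
    rcases List.mem_cons.mp (support_cons h t ▸ hy) with rfl | hyt
    · exact ⟨a, by simp, hfirst.mpr (hu rfl)⟩
    by_cases hya : y = a ∧ f = true
    · obtain ⟨rfl, rfl⟩ := hya
      exact ⟨u, by simp [Sym2.eq_swap], Sym2.eq_swap ▸ hfirst.mpr rfl⟩
    obtain ⟨z, hz, hzS⟩ := ih hrest hyt (fun hy => by simp_all)
      (fun hy => by simpa [Function.iterate_succ_apply] using hv hy)
    exact ⟨z, by simp [hz], hzS⟩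

theorem SimpleGraph.Walk.IsPath.notMem_of_altEdges_false {u v y : V} {p : G.Walk u v}
    (hp : p.IsPath) (halt : altEdges S false p.edges) (he : s(y, u) ∈ p.edges) : s(y, u) ∉ S := by
  cases p with
  | nil => simp at he
  | cons h t =>
    rcases List.mem_cons.mp he with he | he
    · simpa [he] using halt.1
    · exact absurd (t.snd_mem_support_of_mem_edges he) ((cons_isPath_iff h t).mp hp).2

end Alternation

namespace SimpleGraph.Subgraph.IsMatching

variable {V : Type*} {G : SimpleGraph V}

section

variable {M : G.Subgraph}

theorem mem_edges_of_altEdges (hM : M.IsMatching) {u v y z : V} {f : Bool} {p : G.Walk u v}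
    (hp : altEdges M.edgeSet f p.edges) (hy : y ∈ p.support) (hu : y = u → f = true)
    (hv : y = v → not^[p.length] f = false) (hyz : M.Adj y z) : s(y, z) ∈ p.edges := by
  obtain ⟨z', hz', hz'M⟩ := exists_mem_edges_of_altEdges p hp hy hu hv
  rwa [hM.eq_of_adj_left (Subgraph.mem_edgeSet.mp hz'M) hyz] at hz'


theorem deleteVerts (hM : M.IsMatching) {s : Set V} (hs : ∀ ⦃a b⦄, M.Adj a b → a ∈ s → b ∈ s) :
    (M.deleteVerts s).IsMatching := by
  intro a ha
  obtain ⟨b, hab, huniq⟩ := hM ha.1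
  refine ⟨b, deleteVerts_adj.mpr ⟨ha.1, ha.2, M.edge_vert hab.symm,
    fun hb => ha.2 (hs hab.symm hb), hab⟩, fun c hc => huniq c (deleteVerts_adj.mp hc).2.2.2.2⟩

theorem exists_swap (hM : M.IsMatching) {u w₁ w₂ : V} (hu : u ∉ M.verts) (huw : G.Adj u w₁)
    (hw : M.Adj w₁ w₂) :
    ∃ M₁ : G.Subgraph, M₁.IsMatching ∧ M₁.verts = insert u (M.verts \ {w₂}) ∧
      ∀ e, u ∉ e → w₁ ∉ e → (e ∈ M₁.edgeSet ↔ e ∈ M.edgeSet) := by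
  have hw₁ : w₁ ∈ M.verts := M.edge_vert hw
  have hw₁₂ : w₁ ≠ w₂ := (M.adj_sub hw).ne
  have hpair : ∀ ⦃a b⦄, M.Adj a b → a ∈ ({w₁, w₂} : Set V) → b ∈ ({w₁, w₂} : Set V) := by
    rintro a b hab (rfl | rfl)
    · exact .inr (hM.eq_of_adj_left hab hw)
    · exact .inl (hM.eq_of_adj_left hab hw.symm)
  refine ⟨M.deleteVerts {w₁, w₂} ⊔ G.subgraphOfAdj huw, ?_, ?_, ?_⟩
  · refine (hM.deleteVerts hpair).sup (.subgraphOfAdj huw) ?_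
    rw [(hM.deleteVerts hpair).support_eq_verts, (IsMatching.subgraphOfAdj huw).support_eq_verts]
    simp [hu]
  · ext x
    simp only [verts_sup, deleteVerts_verts, subgraphOfAdj_verts, Set.mem_union, Set.mem_sdiff,
      Set.mem_insert_iff, Set.mem_singleton_iff]
    by_cases hx : x = w₁ <;> simp_all [or_comm]
  · refine Sym2.ind fun a b heu hew₁ => ?_
    have hne : s(a, b) ≠ s(u, w₁) := fun h => heu (h ▸ Sym2.mem_mk_left u w₁)
    simp only [Sym2.mem_iff, not_or] at heu hew₁
    rw [edgeSet_sup, Set.mem_union, edgeSet_subgraphOfAdj, Set.mem_singleton_iff, or_iff_left hne,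
      Subgraph.mem_edgeSet, Subgraph.mem_edgeSet, deleteVerts_adj]
    refine ⟨fun h => h.2.2.2.2, fun h => ?_⟩
    have ha : a ≠ w₂ := fun ha => hew₁.2 (hM.eq_of_adj_left (ha ▸ h) hw.symm).symm
    have hb : b ≠ w₂ := fun hb => hew₁.1 (hM.eq_of_adj_right (hb ▸ h) hw).symm
    exact ⟨M.edge_vert h, by simp [Ne.symm hew₁.1, ha], M.edge_vert h.symm,
      by simp [Ne.symm hew₁.2, hb], h⟩

end

section Finite

variable [Finite V]

theorem exists_notMem_verts_of_even {M : G.Subgraph} (hM : M.IsMatching) {u v : V} :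
    ∀ p : G.Walk u v, p.IsPath → altEdges M.edgeSet false p.edges → u ∉ M.verts →
      Even p.length → ∃ N : G.Subgraph, N.IsMatching ∧ v ∉ N.verts ∧
        N.verts ⊆ insert u M.verts ∧ N.verts.ncard = M.verts.ncard
  | .nil, _, _, hu, _ => ⟨M, hM, hu, Set.subset_insert _ _, rfl⟩
  | .cons _ .nil, _, _, _, heven => by simp at heven
  | .cons (v := w₁) h₁ (.cons (v := w₂) h₂ q), hp, halt, hu, heven => by
    have hw : M.Adj w₁ w₂ := halt.2.1.mpr rfl
    have hw₂ : w₂ ∈ M.verts := M.edge_vert hw.symm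
    rw [cons_isPath_iff, cons_isPath_iff, support_cons, List.mem_cons, not_or] at hp
    obtain ⟨M₁, hM₁, hverts, hedges⟩ := hM.exists_swap hu h₁ hw
    have hq : altEdges M₁.edgeSet false q.edges := by
      refine (altEdges_congr (fun e he => hedges e ?_ ?_) false).mpr halt.2.2
      · exact fun hue => hp.2.2 (q.mem_support_of_mem_edges he hue)
      · exact fun hwe => hp.1.2 (q.mem_support_of_mem_edges he hwe)
    have hw₂M₁ : w₂ ∉ M₁.verts := by
      rw [hverts]
      rintro (h | h)
      · exact hu (h ▸ hw₂)
      · exact h.2 rfl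
    obtain ⟨N, hN, hvN, hsub, hcard⟩ := hM₁.exists_notMem_verts_of_even q hp.1.1 hq hw₂M₁
      (by simpa [Nat.even_add_one] using heven)
    refine ⟨N, hN, hvN, hsub.trans ?_, hcard.trans ?_⟩
    · rw [hverts]
      rintro x (rfl | rfl | ⟨hx, -⟩)
      exacts [.inr hw₂, .inl rfl, .inr hx]
    · rw [hverts, Set.ncard_insert_of_notMem (fun h => hu h.1),
        Set.ncard_sdiff_singleton_add_one hw₂]

theorem exists_ncard_eq_add_two {M : G.Subgraph} (hM : M.IsMatching) {u v : V} (p : G.Walk u v)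
    (hp : p.IsPath) (halt : altEdges M.edgeSet false p.edges) (hu : u ∉ M.verts)
    (hv : v ∉ M.verts) (hodd : Odd p.length) :
    ∃ K : G.Subgraph, K.IsMatching ∧ K.verts.ncard = M.verts.ncard + 2 := by
  obtain ⟨w, p₀, h, rfl⟩ :=
    p.exists_eq_concat_of_not_nil fun hnil => by simp [length_eq_zero_iff.mpr hnil] at hodd
  rw [concat_isPath_iff] at hp
  rw [edges_concat, List.concat_eq_append, altEdges_append] at halt
  rw [length_concat, Nat.odd_add_one, Nat.not_odd_iff_even] at hodd
  obtain ⟨N, hN, hwN, hsub, hcard⟩ := hM.exists_notMem_verts_of_even p₀ hp.1 halt.1 hu hodd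
  have hvN : v ∉ N.verts := fun hvN =>
    (hsub hvN).elim (fun hvu => hp.2 (hvu ▸ p₀.start_mem_support)) hv
  have hdisj : Disjoint N.verts {w, v} := by simp [hwN, hvN]
  refine ⟨N ⊔ G.subgraphOfAdj h, hN.sup (.subgraphOfAdj h) ?_, ?_⟩
  · rwa [hN.support_eq_verts, (IsMatching.subgraphOfAdj h).support_eq_verts, subgraphOfAdj_verts]
  · rw [verts_sup, subgraphOfAdj_verts, Set.ncard_union_eq hdisj, Set.ncard_pair h.ne, hcard]

end Finite

end SimpleGraph.Subgraph.IsMatching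

section Trace

variable {V : Type*} {G : SimpleGraph V} {M N : G.Subgraph}

/-- The edges of `q` lie alternately in `N \ M` and `M \ N`: a piece of `M ∆ N` traced back
from `v`. -/
structure IsBiAlternating (M N : G.Subgraph) {x v : V} (q : G.Walk x v) : Prop where
  isPath : q.IsPath
  even_length : Even q.length
  altEdges_left : altEdges M.edgeSet false q.edges
  altEdges_right : altEdges N.edgeSet true q.edges

theorem IsBiAlternating.extend [Finite V] (hM : M.IsMatching) (hN : N.IsMatching)
    (hmax : ∀ K : G.Subgraph, K.IsMatching → K.verts.ncard ≤ N.verts.ncard) {x v : V}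
    (hv : v ∉ N.verts) {q : G.Walk x v} (hq : IsBiAlternating M N q) (hx : x ∈ M.verts) :
    ∃ (x' : V) (q' : G.Walk x' v), IsBiAlternating M N q' ∧ q'.length = q.length + 2 := by
  obtain ⟨x₁, hx₁, -⟩ := hM hx
  -- otherwise the `M`-edge `x₁x` would lie on `q`, but `q` leaves `x` along a non-`M` edge
  have hx₁q : x₁ ∉ q.support := fun hx₁q =>
    hq.isPath.notMem_of_altEdges_false hq.altEdges_left
      (hM.mem_edges_of_altEdges hq.altEdges_left hx₁q (fun h => absurd h (M.adj_sub hx₁).ne')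
        (fun _ => by rw [Bool.involutive_not.iterate_even hq.even_length, id]) hx₁.symm)
      (Subgraph.mem_edgeSet.mpr hx₁.symm)
  have hx₁N : x₁ ∈ N.verts := by
    by_contra hx₁N
    have hx₁x : s(x₁, x) ∉ N.edgeSet := fun h => hx₁N (N.edge_vert h)
    obtain ⟨K, hK, hcard⟩ := hN.exists_ncard_eq_add_two (cons (M.adj_sub hx₁).symm q)
      (hq.isPath.cons hx₁q) ⟨iff_of_false hx₁x (by simp), hq.altEdges_right⟩ hx₁N hv
      (by simpa [Nat.odd_add_one] using hq.even_length)
    have := hmax K hK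
    omega
  obtain ⟨x₂, hx₂, -⟩ := hN hx₁N
  have hx₂q : x₂ ∉ q.support := fun hx₂q =>
    hx₁q (q.snd_mem_support_of_mem_edges (hN.mem_edges_of_altEdges hq.altEdges_right hx₂q
      (fun _ => rfl) (fun h => absurd (h ▸ N.edge_vert hx₂.symm) hv) hx₂.symm))
  have hx₂x : x₂ ≠ x := fun h => hx₂q (h ▸ q.start_mem_support)
  refine ⟨x₂, cons (N.adj_sub hx₂).symm (cons (M.adj_sub hx₁).symm q), ⟨?_, ?_, ?_, ?_⟩, rfl⟩
  · exact (hq.isPath.cons hx₁q).cons (by simp [hx₂q, (N.adj_sub hx₂).ne'])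
  · simpa [Nat.even_add_one] using hq.even_length
  · refine ⟨iff_of_false (fun h => hx₂x ?_) (by simp),
      iff_of_true (Subgraph.mem_edgeSet.mpr hx₁.symm) rfl, hq.altEdges_left⟩
    exact hM.eq_of_adj_left (Subgraph.mem_edgeSet.mp h).symm hx₁.symm
  · refine ⟨iff_of_true (Subgraph.mem_edgeSet.mpr hx₂.symm) rfl,
      iff_of_false (fun h => hx₂x ?_) (by simp), hq.altEdges_right⟩
    exact hN.eq_of_adj_left hx₂ (Subgraph.mem_edgeSet.mp h)

theorem evenVtx_of_notMem_verts [Fintype V] (hM : M.IsMatching) (hN : N.IsMatching)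
    (hmax : ∀ K : G.Subgraph, K.IsMatching → K.verts.ncard ≤ N.verts.ncard) {v : V}
    (hv : v ∉ N.verts) : EvenVtx G M v := by
  by_contra hnot
  have hgrow : ∀ k, ∃ (x : V) (q : G.Walk x v), IsBiAlternating M N q ∧ q.length = 2 * k := by
    intro k
    induction k with
    | zero => exact ⟨v, nil, ⟨.nil, ⟨0, rfl⟩, trivial, trivial⟩, rfl⟩
    | succ k ih =>
      obtain ⟨x, q, hq, hlen⟩ := ih
      have hx : x ∈ M.verts := by
        by_contra hx
        exact hnot ⟨x, hx, q, hq.isPath, hq.altEdges_left, hq.even_length⟩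
      obtain ⟨x', q', hq', hlen'⟩ := hq.extend hM hN hmax hv hx
      exact ⟨x', q', hq', by omega⟩
  obtain ⟨x, q, hq, hlen⟩ := hgrow (Fintype.card V)
  have := hq.isPath.length_lt
  omega

end Trace

section Classes

variable {V : Type*} {G : SimpleGraph V} {M : G.Subgraph}

theorem evenVtx_of_evenVtx [Fintype V] {M' : G.Subgraph} (hM : M.IsMatching)
    (hmax : ∀ N : G.Subgraph, N.IsMatching → N.verts.ncard ≤ M.verts.ncard)
    (hM' : M'.IsMatching) {v : V} (h : EvenVtx G M v) : EvenVtx G M' v := by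
  obtain ⟨u, hu, p, hp, halt, heven⟩ := h
  obtain ⟨N, hN, hvN, -, hcard⟩ := hM.exists_notMem_verts_of_even p hp halt hu heven
  exact evenVtx_of_notMem_verts hM' hN (fun K hK => hcard ▸ hmax K hK) hvN

theorem oddVtx_iff_exists_evenVtx_adj [DecidableEq V] (c : G.Coloring Bool) (hM : M.IsMatching)
    {v : V} : OddVtx G M v ↔ ∃ w, EvenVtx G M w ∧ G.Adj w v := by
  constructor
  · rintro ⟨u, hu, p, hp, halt, hodd⟩
    obtain ⟨w, p₀, h, rfl⟩ :=
      p.exists_eq_concat_of_not_nil fun hnil => by simp [length_eq_zero_iff.mpr hnil] at hodd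
    rw [concat_isPath_iff] at hp
    rw [edges_concat, List.concat_eq_append, altEdges_append] at halt
    rw [length_concat, Nat.odd_add_one, Nat.not_odd_iff_even] at hodd
    exact ⟨w, ⟨u, hu, p₀, hp.1, halt.1, hodd⟩, h⟩
  rintro ⟨w, ⟨u, hu, p, hp, halt, heven⟩, hwv⟩
  by_cases hvp : v ∈ p.support
  · refine ⟨u, hu, p.takeUntil v hvp, hp.takeUntil hvp, ?_, ?_⟩
    · rw [← p.take_spec hvp, edges_append, altEdges_append] at halt
      exact halt.1
    · have huw : c u = c w := by simpa using (c.even_length_iff_congr p).mp heven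
      have hwv := c.valid hwv
      rw [c.odd_length_iff_not_congr, huw]
      revert hwv
      cases c w <;> cases c v <;> simp
  have hwv' : s(w, v) ∉ M.edgeSet := fun h =>
    hvp (p.snd_mem_support_of_mem_edges (hM.mem_edges_of_altEdges halt p.end_mem_support
      (fun hwu => absurd (hwu ▸ M.edge_vert h) hu)
      (fun _ => by rw [Bool.involutive_not.iterate_even heven, id]) h))
  refine ⟨u, hu, p.concat hwv, hp.concat hvp hwv, ?_, ?_⟩
  · rw [edges_concat, List.concat_eq_append, altEdges_append, length_edges,
      Bool.involutive_not.iterate_even heven, id]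
    exact ⟨halt, iff_of_false hwv' (by simp), trivial⟩
  · rw [length_concat]
    exact heven.add_one

theorem unreachableVtx_iff {v : V} :
    UnreachableVtx G M v ↔ ¬EvenVtx G M v ∧ ¬OddVtx G M v := by
  constructor
  · intro h
    exact ⟨fun ⟨u, hu, p, hp, ha, _⟩ => h u p hu hp ha, fun ⟨u, hu, p, hp, ha, _⟩ => h u p hu hp ha⟩
  · rintro ⟨hne, hno⟩ u p hu hp ha
    rcases Nat.even_or_odd p.length with h | h
    exacts [hne ⟨u, hu, p, hp, ha, h⟩, hno ⟨u, hu, p, hp, ha, h⟩]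

end Classes

/-- The Dulmage–Mendelsohn decomposition does not depend on the choice of
maximum matching: the even, odd and unreachable vertex classes coincide for any
two maximum matchings of a bipartite graph. -/
theorem dm_classes_independent_of_matching
    {V : Type*} [Fintype V] (G : SimpleGraph V)
    (side : V → Bool) (hbip : ∀ u v, G.Adj u v → side u ≠ side v)
    (M M' : G.Subgraph) (hM : M.IsMatching) (hM' : M'.IsMatching)
    (hmax : ∀ N : G.Subgraph, N.IsMatching → N.verts.ncard ≤ M.verts.ncard)
    (hmax' : ∀ N : G.Subgraph, N.IsMatching → N.verts.ncard ≤ M'.verts.ncard) :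
    (∀ v, EvenVtx G M v ↔ EvenVtx G M' v) ∧
    (∀ v, OddVtx G M v ↔ OddVtx G M' v) ∧
    (∀ v, UnreachableVtx G M v ↔ UnreachableVtx G M' v) := by
  classical
  have heven : ∀ v, EvenVtx G M v ↔ EvenVtx G M' v := fun v =>
    ⟨evenVtx_of_evenVtx hM hmax hM', evenVtx_of_evenVtx hM' hmax' hM⟩
  let c : G.Coloring Bool := Coloring.mk side fun h => hbip _ _ h
  have hodd : ∀ v, OddVtx G M v ↔ OddVtx G M' v := fun v => by
    simp only [oddVtx_iff_exists_evenVtx_adj c hM, oddVtx_iff_exists_evenVtx_adj c hM', heven]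
  exact ⟨heven, hodd, fun v => by rw [unreachableVtx_iff, unreachableVtx_iff, heven, hodd]⟩
end

section
/- In the one-sided model, in any popular matching the only applicants that may be unmatched are those whose entire preference list consists of f-jobs (i.e., r_a = ∞). -/
/-- A matching in a bipartite graph `G = (A ∪ B, E)`. -/
structure BMatching (A B : Type*) (E : A → B → Prop) where
  mA : A → Option B
  mB : B → Option A
  consistent : ∀ a b, mA a = some b ↔ mB b = some a
  valid : ∀ a b, mA a = some b → E a b

/-- Vote of an applicant with rank-based preferences `r` (lower rank = better)
comparing two possible partners; unmatched (`none`) is worst. -/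
def voteRank {Y : Type*} (r : Y → ℕ) : Option Y → Option Y → ℤ
  | some y, some y' => if r y < r y' then 1 else if r y' < r y then -1 else 0
  | some _, none => 1
  | none, some _ => -1
  | none, none => 0

variable {A B : Type*}

/-- `b` is applicant `a`'s most preferred neighbour (its top choice `f_a`). -/
def isTop (E : A → B → Prop) (rank : A → B → ℕ) (a : A) (b : B) : Prop :=
  E a b ∧ ∀ b', E a b' → b' ≠ b → rank a b < rank a b'

/-- `b` is an f-job: some applicant's top choice. -/
def isF (E : A → B → Prop) (rank : A → B → ℕ) (b : B) : Prop :=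
  ∃ a, isTop E rank a b

/-- `b` is `a`'s most preferred non-f-job `r_a`. -/
def isR (E : A → B → Prop) (rank : A → B → ℕ) (a : A) (b : B) : Prop :=
  E a b ∧ ¬ isF E rank b ∧
    ∀ b', E a b' → ¬ isF E rank b' → b' ≠ b → rank a b < rank a b'

/-- Popularity in the one-sided model: only applicants in `A` vote. -/
def PopularOS [Fintype A] (E : A → B → Prop) (rank : A → B → ℕ)
    (M : BMatching A B E) : Prop :=
  ∀ N : BMatching A B E, 0 ≤ ∑ a, voteRank (rank a) (M.mA a) (N.mA a)

lemma voteRank_self {Y : Type*} (r : Y → ℕ) (o : Option Y) : voteRank r o o = 0 := by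
  cases o <;> simp [voteRank]

lemma exists_top [Fintype B] (E : A → B → Prop) (rank : A → B → ℕ)
    (hstrict : ∀ a, Function.Injective (rank a))
    (a : A) (b0 : B) (h : E a b0) : ∃ f, isTop E rank a f := by
  classical
  obtain ⟨f, hfmem, hfmin⟩ := Finset.exists_min_image (Finset.univ.filter (E a ·))
    (rank a) ⟨b0, by simpa using h⟩
  refine ⟨f, by simpa using hfmem, fun b' hb' hne => ?_⟩
  have hle : rank a f ≤ rank a b' := hfmin b' (by simpa using hb')
  exact lt_of_le_of_ne hle (fun he => hne ((hstrict a he.symm)))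

/-- In the one-sided model, in any popular matching the only applicants that
may remain unmatched are those whose entire preference list consists of
f-jobs. -/
theorem one_sided_unmatched_only_all_f
    [Fintype A] [Fintype B] (E : A → B → Prop) (rank : A → B → ℕ)
    (hstrict : ∀ a, Function.Injective (rank a))
    (M : BMatching A B E) (hpop : PopularOS E rank M) :
    ∀ a, M.mA a = none → ∀ b, E a b → isF E rank b := by
  classical
  intro a ha b hb
  by_contra hbF
  rcases hbfree : M.mB b with _ | a'
  · -- b is free: just match a to b
    set NmA : A → Option B := fun x => if x = a then some b else M.mA x with hNmA
    set NmB : B → Option A := fun y => if y = b then some a else M.mB y with hNmB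
    have hcons : ∀ x y, NmA x = some y ↔ NmB y = some x := by
      intro x y
      simp only [hNmA, hNmB]
      by_cases hxa : x = a
      · subst hxa
        by_cases hyb : y = b
        · subst hyb; simp
        · simp only [if_pos rfl, if_neg hyb]
          constructor
          · intro h; exact absurd (Option.some.inj h) (Ne.symm hyb)
          · intro h
            have := (M.consistent x y).mpr h
            rw [ha] at this; exact absurd this (by simp)
      · by_cases hyb : y = b
        · subst hyb
          simp only [if_neg hxa, if_pos rfl]
          constructor
          · intro h
            have := (M.consistent x y).mp h
            rw [hbfree] at this; exact absurd this (by simp)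
          · intro h; exact absurd (Option.some.inj h).symm hxa
        · simp only [if_neg hxa, if_neg hyb]; exact M.consistent x y
    have hvalid : ∀ x y, NmA x = some y → E x y := by
      intro x y h
      simp only [hNmA] at h
      by_cases hxa : x = a
      · subst hxa; rw [if_pos rfl] at h; rw [← Option.some.inj h]; exact hb
      · rw [if_neg hxa] at h; exact M.valid x y h
    have h0 := hpop ⟨NmA, NmB, hcons, hvalid⟩
    have hsum : ∑ x, voteRank (rank x) (M.mA x) (NmA x) = -1 := by
      rw [Finset.sum_eq_single_of_mem a (Finset.mem_univ a)]
      · simp only [hNmA, if_pos rfl, ha, voteRank]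
      · intro x _ hxa
        simp only [hNmA, if_neg hxa, voteRank_self]
    simp only [BMatching.mA] at h0
    rw [hsum] at h0
    omega
  · -- b is matched to a'
    have haa' : M.mA a' = some b := (M.consistent a' b).mpr hbfree
    have hane : a' ≠ a := fun h => by rw [h, ha] at haa'; exact absurd haa' (by simp)
    obtain ⟨f, hftop⟩ := exists_top E rank hstrict a' b (M.valid a' b haa')
    have hFf : isF E rank f := ⟨a', hftop⟩
    have hbnef : b ≠ f := fun h => hbF (h ▸ hFf)
    have hlt : rank a' f < rank a' b := hftop.2 b (M.valid a' b haa') hbnef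
    set NmA : A → Option B := fun x =>
      if x = a then some b else if x = a' then some f
      else if M.mA x = some f then none else M.mA x with hNmA
    set NmB : B → Option A := fun y =>
      if y = b then some a else if y = f then some a' else M.mB y with hNmB
    have hcons : ∀ x y, NmA x = some y ↔ NmB y = some x := by
      intro x y
      simp only [hNmA, hNmB]
      by_cases hxa : x = a
      · subst hxa
        rw [if_pos rfl]
        by_cases hyb : y = b
        · subst hyb; simp
        · rw [if_neg hyb]
          by_cases hyf : y = f
          · subst hyf
            rw [if_pos rfl]
            constructor
            · intro h; exact absurd (Option.some.inj h) hbnef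
            · intro h; exact absurd (Option.some.inj h) hane
          · rw [if_neg hyf]
            constructor
            · intro h; exact absurd (Option.some.inj h) (Ne.symm hyb)
            · intro h
              have := (M.consistent x y).mpr h
              rw [ha] at this; exact absurd this (by simp)
      · rw [if_neg hxa]
        by_cases hxa' : x = a'
        · subst hxa'
          rw [if_pos rfl]
          by_cases hyb : y = b
          · subst hyb
            rw [if_pos rfl]
            constructor
            · intro h; exact absurd (Option.some.inj h).symm hbnef
            · intro h; exact absurd (Option.some.inj h).symm hxa
          · rw [if_neg hyb]
            by_cases hyf : y = f
            · subst hyf; simp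
            · rw [if_neg hyf]
              constructor
              · intro h; exact absurd (Option.some.inj h).symm hyf
              · intro h
                have := (M.consistent x y).mpr h
                rw [haa'] at this
                exact absurd (Option.some.inj this) (Ne.symm hyb)
        · rw [if_neg hxa']
          by_cases hxf : M.mA x = some f
          · rw [if_pos hxf]
            by_cases hyb : y = b
            · subst hyb
              rw [if_pos rfl]
              constructor
              · intro h; exact absurd h (by simp)
              · intro h; exact absurd (Option.some.inj h).symm hxa
            · rw [if_neg hyb]
              by_cases hyf : y = f
              · subst hyf
                rw [if_pos rfl]
                constructor
                · intro h; exact absurd h (by simp)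
                · intro h; exact absurd (Option.some.inj h).symm hxa'
              · rw [if_neg hyf]
                constructor
                · intro h; exact absurd h (by simp)
                · intro h
                  have := (M.consistent x y).mpr h
                  rw [hxf] at this
                  exact absurd (Option.some.inj this) (Ne.symm hyf)
          · rw [if_neg hxf]
            by_cases hyb : y = b
            · subst hyb
              rw [if_pos rfl]
              constructor
              · intro h
                have := (M.consistent x y).mp h
                rw [hbfree] at this
                exact absurd (Option.some.inj this).symm hxa'
              · intro h; exact absurd (Option.some.inj h).symm hxa
            · rw [if_neg hyb]
              by_cases hyf : y = f
              · subst hyf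
                rw [if_pos rfl]
                constructor
                · intro h; exact absurd h hxf
                · intro h; exact absurd (Option.some.inj h).symm hxa'
              · rw [if_neg hyf]; exact M.consistent x y
    have hvalid : ∀ x y, NmA x = some y → E x y := by
      intro x y h
      simp only [hNmA] at h
      by_cases hxa : x = a
      · subst hxa; rw [if_pos rfl] at h; rw [← Option.some.inj h]; exact hb
      · rw [if_neg hxa] at h
        by_cases hxa' : x = a'
        · subst hxa'; rw [if_pos rfl] at h; rw [← Option.some.inj h]; exact hftop.1
        · rw [if_neg hxa'] at h
          by_cases hxf : M.mA x = some f
          · rw [if_pos hxf] at h; exact absurd h (by simp)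
          · rw [if_neg hxf] at h; exact M.valid x y h
    have h0 := hpop ⟨NmA, NmB, hcons, hvalid⟩
    simp only [BMatching.mA] at h0
    have hNa : NmA a = some b := by simp [hNmA]
    have hNa' : NmA a' = some f := by simp [hNmA, hane]
    have va : voteRank (rank a) (M.mA a) (NmA a) = -1 := by
      rw [hNa, ha]; rfl
    have va' : voteRank (rank a') (M.mA a') (NmA a') = -1 := by
      rw [hNa', haa']
      show (if rank a' b < rank a' f then (1 : ℤ) else if rank a' f < rank a' b then -1 else 0) = -1
      rw [if_neg (by omega), if_pos hlt]
    rcases hff : M.mB f with _ | a''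
    · -- nobody evicted
      have hzero : ∀ x ∈ Finset.univ, x ∉ ({a, a'} : Finset A) →
          voteRank (rank x) (M.mA x) (NmA x) = 0 := by
        intro x _ hx
        simp only [Finset.mem_insert, Finset.mem_singleton, not_or] at hx
        have hxf : M.mA x ≠ some f := by
          intro h
          have := (M.consistent x f).mp h
          rw [hff] at this; exact absurd this (by simp)
        simp only [hNmA, if_neg hx.1, if_neg hx.2, if_neg hxf, voteRank_self]
      rw [← Finset.sum_subset (Finset.subset_univ ({a, a'} : Finset A)) hzero] at h0
      rw [Finset.sum_pair (Ne.symm hane), va, va'] at h0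
      omega
    · -- a'' is evicted from f
      have hma'' : M.mA a'' = some f := (M.consistent a'' f).mpr hff
      have ha''a : a'' ≠ a := fun h => by rw [h, ha] at hma''; exact absurd hma'' (by simp)
      have ha''a' : a'' ≠ a' := fun h => by
        rw [h, haa'] at hma''; exact absurd (Option.some.inj hma'') hbnef
      have hNa'' : NmA a'' = none := by
        simp [hNmA, ha''a, ha''a', hma'']
      have va'' : voteRank (rank a'') (M.mA a'') (NmA a'') = 1 := by
        rw [hNa'', hma'']; rfl
      have hzero : ∀ x ∈ Finset.univ, x ∉ ({a, a', a''} : Finset A) →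
          voteRank (rank x) (M.mA x) (NmA x) = 0 := by
        intro x _ hx
        simp only [Finset.mem_insert, Finset.mem_singleton, not_or] at hx
        have hxf : M.mA x ≠ some f := by
          intro h
          have := (M.consistent x f).mp h
          rw [hff] at this
          exact hx.2.2 (Option.some.inj this).symm
        simp only [hNmA, if_neg hx.1, if_neg hx.2.1, if_neg hxf, voteRank_self]
      rw [← Finset.sum_subset (Finset.subset_univ ({a, a', a''} : Finset A)) hzero] at h0
      rw [Finset.sum_insert (by simp [Ne.symm hane, Ne.symm ha''a]),
        Finset.sum_pair (Ne.symm ha''a'), va, va', va''] at h0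
      omega
end
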